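/- Let G be routing-connected with a proper scope mapping S. Then for every two edges e = (s, x) and f = (y, t) in E(G), there exists a walk P from s to t in G that starts with e, ends with f, and whose edges can be partitioned into a prefix with non-decreasing scope levels along the walk followed by a suffix with non-increasing scope levels. -/

import Mathlib

variable {V : Type*}

/-- A walk in a directed graph given by its edge set `E`, from `u` to `v`,
represented as the list of its edges. -/
def IsWalk (E : Finset (V × V)) : V → V → List (V × V) → Prop
  | u, v, [] => u = v
  | u, v, e :: p => e.1 = u ∧ e ∈ E ∧ IsWalk E e.2 v p

/-- Weight of a walk with respect to a weighting `w`. -/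
def walkWt (w : V × V → ℝ) (p : List (V × V)) : ℝ := (p.map w).sum

/-- The `ℓ`-th coordinate of the scope `S`-draw of a walk `p`:
the total weight of its edges of scope level strictly greater than `ℓ`. -/
def sdraw (w : V × V → ℝ) (S : V × V → ℕ∞) (p : List (V × V)) (ℓ : ℕ∞) : ℝ :=
  (p.map (fun f => if ℓ < S f then w f else 0)).sum

/-- Routing-connectivity: for every pair of edges `e`, `f` there is a walk
starting with `e` and ending with `f`. -/
def RoutingConnected (E : Finset (V × V)) : Prop :=
  ∀ e ∈ E, ∀ f ∈ E, ∃ p : List (V × V),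
    IsWalk E e.1 f.2 p ∧ p.head? = some e ∧ p.getLast? = some f

open Classical in
/-- A scope mapping `S` on a routing-connected graph is proper if every
level-induced subgraph `G^[i]` is routing-connected. -/
def ProperScope (E : Finset (V × V)) (S : V × V → ℕ∞) : Prop :=
  ∀ i : ℕ∞, (∃ e ∈ E, S e = i) → RoutingConnected (E.filter (fun f => i ≤ S f))

lemma isWalk_mono {E E' : Finset (V × V)} (hEE : E ⊆ E') :
    ∀ {u v : V} {l : List (V × V)}, IsWalk E u v l → IsWalk E' u v l
  | u, v, [], h => h
  | u, v, e :: p, ⟨h1, h2, h3⟩ => ⟨h1, hEE h2, isWalk_mono hEE h3⟩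

lemma isWalk_edges_mem {E : Finset (V × V)} :
    ∀ {u v : V} {l : List (V × V)}, IsWalk E u v l → ∀ x ∈ l, x ∈ E
  | u, v, [], _, x, hx => by simp at hx
  | u, v, e :: p, ⟨h1, h2, h3⟩, x, hx => by
      rcases List.mem_cons.1 hx with rfl | hx
      · exact h2
      · exact isWalk_edges_mem h3 x hx

lemma isWalk_append {E : Finset (V × V)} :
    ∀ {u v : V} {l₁ l₂ : List (V × V)},
      IsWalk E u v (l₁ ++ l₂) ↔ ∃ w, IsWalk E u w l₁ ∧ IsWalk E w v l₂ := by
  intro u v l₁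
  induction l₁ generalizing u with
  | nil => intro l₂; constructor
           · intro h; exact ⟨u, rfl, h⟩
           · rintro ⟨w, rfl, h⟩; exact h
  | cons e p ih =>
      intro l₂
      constructor
      · rintro ⟨h1, h2, h3⟩
        rcases (ih).1 h3 with ⟨w, hw1, hw2⟩
        exact ⟨w, ⟨h1, h2, hw1⟩, hw2⟩
      · rintro ⟨w, ⟨h1, h2, h3⟩, h4⟩
        exact ⟨h1, h2, (ih).2 ⟨w, h3, h4⟩⟩

lemma isWalk_end {E : Finset (V × V)} :
    ∀ {u v : V} {l : List (V × V)} {x : V × V},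
      IsWalk E u v l → l.getLast? = some x → v = x.2
  | u, v, [], x, _, h => by simp at h
  | u, v, [e], x, ⟨_, _, h3⟩, h => by
      simp at h; subst h; exact h3.symm
  | u, v, e :: e' :: p, x, ⟨_, _, h3⟩, h => by
      rw [List.getLast?_cons_cons] at h
      exact isWalk_end h3 h

lemma chain'_const {α : Type*} {r : α → α → Prop} {l : List α}
    (h : ∀ x ∈ l, ∀ y ∈ l, r x y) : List.Chain' r l := by
  induction l with
  | nil => exact List.isChain_nil
  | cons a t ih =>
      cases t with
      | nil => exact List.isChain_singleton a
      | cons b t' =>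
        refine List.IsChain.cons_cons (h a (by simp) b (by simp)) (ih ?_)
        intro x hx y hy
        exact h x (List.mem_cons_of_mem _ hx) y (List.mem_cons_of_mem _ hy)

example : True := trivial

open Classical in
lemma up_walk (E : Finset (V × V)) (S : V × V → ℕ∞) (hP : ProperScope E S) (M : ℕ∞)
    (hM : ∀ x ∈ E, S x ≤ M) (hg : ∃ g ∈ E, S g = M) :
    ∀ n : ℕ, ∀ e ∈ E, ((E.image S).filter (fun v => S e ≤ v)).card ≤ n →
    ∃ p a, IsWalk E e.1 a.2 p ∧ p.head? = some e ∧ p.getLast? = some a ∧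
      a ∈ E ∧ S a = M ∧ List.Chain' (fun x y => S x ≤ S y) p := by
  intro n
  induction n with
  | zero =>
      intro e he hcard
      exfalso
      have : S e ∈ (E.image S).filter (fun v => S e ≤ v) := by
        simp only [Finset.mem_filter, Finset.mem_image]
        exact ⟨⟨e, he, rfl⟩, le_refl _⟩
      have := Finset.card_pos.2 ⟨_, this⟩
      omega
  | succ n ih =>
      intro e he hcard
      by_cases hSe : S e = M
      · exact ⟨[e], e, ⟨rfl, he, rfl⟩, rfl, rfl, he, hSe, List.isChain_singleton e⟩
      · have hSeM : S e < M := lt_of_le_of_ne (hM e he) hSe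
        obtain ⟨g, hgE, hgM⟩ := hg
        set E' := E.filter (fun f => S e ≤ S f) with hE'
        have hE'sub : E' ⊆ E := Finset.filter_subset _ _
        have heE' : e ∈ E' := Finset.mem_filter.2 ⟨he, le_refl _⟩
        have hgE' : g ∈ E' := Finset.mem_filter.2 ⟨hgE, by rw [hgM]; exact le_of_lt hSeM⟩
        obtain ⟨w, hw, hwh, hwl⟩ := hP (S e) ⟨e, he, rfl⟩ e heE' g hgE'
        have hwE' : ∀ x ∈ w, x ∈ E' := isWalk_edges_mem hw
        have hwge : ∀ x ∈ w, S e ≤ S x := fun x hx => (Finset.mem_filter.1 (hwE' x hx)).2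
        -- split w at the first edge of scope > S e
        set Q : V × V → Bool := fun x => decide (S x ≤ S e) with hQ
        set t := w.takeWhile Q with ht
        set d := w.dropWhile Q with hd
        have hdnil : d ≠ [] := by
          intro hcon
          have := List.dropWhile_eq_nil_iff.1 hcon g (by
            have : w.getLast? = some g := hwl
            exact List.mem_of_getLast? this)
          rw [hQ] at this
          simp only [decide_eq_true_eq] at this
          exact absurd (le_trans (le_of_eq hgM.symm) this) (not_le.2 hSeM)
        obtain ⟨e', d', hd'⟩ := List.exists_cons_of_ne_nil hdnil
        have he'w : e' ∈ w := by
          have : e' ∈ d := by rw [hd']; exact List.mem_cons_self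
          exact (List.dropWhile_sublist Q).subset this
        have he'E : e' ∈ E := hE'sub (hwE' e' he'w)
        have he'gt : S e < S e' := by
          have hdn : List.dropWhile Q w ≠ [] := by rw [← hd]; exact hdnil
          have h1 := List.head_dropWhile_not Q hdn
          have h2 : (List.dropWhile Q w).head hdn = e' := by
            have h3 : (List.dropWhile Q w).head? = some e' := by rw [← hd, hd']; rfl
            rw [List.head?_eq_head hdn] at h3
            exact Option.some.inj h3
          rw [h2] at h1
          simp only [hQ, decide_eq_false_iff_not, not_le] at h1
          exact h1
        -- measure decreases
        have hsubset : (E.image S).filter (fun v => S e' ≤ v) ⊂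
            (E.image S).filter (fun v => S e ≤ v) := by
          refine Finset.ssubset_iff_of_subset ?_ |>.2 ?_
          · intro v hv
            rcases Finset.mem_filter.1 hv with ⟨hv1, hv2⟩
            exact Finset.mem_filter.2 ⟨hv1, le_trans (le_of_lt he'gt) hv2⟩
          · exact ⟨S e, Finset.mem_filter.2 ⟨Finset.mem_image_of_mem S he, le_refl _⟩,
              fun hcon => absurd (Finset.mem_filter.1 hcon).2 (not_le.2 he'gt)⟩
        have hcard' : ((E.image S).filter (fun v => S e' ≤ v)).card ≤ n := by
          have := Finset.card_lt_card hsubset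
          omega
        obtain ⟨p', a, hp'w, hp'h, hp'l, haE, haM, hp'c⟩ := ih e' he'E hcard'
        refine ⟨t ++ p', a, ?_, ?_, ?_, haE, haM, ?_⟩
        · -- walk
          have hw2 : IsWalk E e.1 g.2 w := isWalk_mono hE'sub hw
          have : IsWalk E e.1 g.2 (t ++ d) := by
            rw [ht, hd, List.takeWhile_append_dropWhile]; exact hw2
          obtain ⟨mid, hmid1, hmid2⟩ := isWalk_append.1 this
          rw [hd'] at hmid2
          obtain ⟨hm1, _, _⟩ := hmid2
          subst hm1
          exact isWalk_append.2 ⟨e'.1, hmid1, hp'w⟩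
        · -- head
          have htne : t ≠ [] := by
            intro hcon
            have : w = d := by rw [← List.takeWhile_append_dropWhile (p := Q) (l := w), ← ht, ← hd, hcon]; rfl
            have hh : w.head? = some e' := by rw [this, hd']; rfl
            rw [hwh] at hh
            have : e = e' := by injection hh
            rw [this] at he'gt; exact absurd he'gt (lt_irrefl _)
          rw [List.head?_append]
          have : t.head? = some e := by
            obtain ⟨x, t', hxt⟩ := List.exists_cons_of_ne_nil htne
            have hwt : w.head? = t.head? := by
              conv_lhs => rw [← List.takeWhile_append_dropWhile (p := Q) (l := w), ← ht, ← hd]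
              rw [List.head?_append, hxt]; rfl
            rw [← hwt, hwh]
          rw [this]; rfl
        · -- last
          have hp'ne : p' ≠ [] := by
            intro hcon; rw [hcon] at hp'h; exact absurd hp'h (by simp)
          rw [List.getLast?_append, hp'l]; rfl
        · -- chain
          apply List.isChain_append.2
          refine ⟨?_, hp'c, ?_⟩
          · apply chain'_const
            intro x hx y hy
            have hx1 : S x ≤ S e := by
              have := List.mem_takeWhile_imp (by rw [← ht]; exact hx)
              simpa [hQ] using this
            have hy2 : S e ≤ S y := hwge y (by
              rw [← List.takeWhile_append_dropWhile (p := Q) (l := w), ← ht, ← hd]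
              exact List.mem_append_left _ hy)
            exact le_trans hx1 hy2
          · intro x hx y hy
            have hx1 : S x ≤ S e := by
              have hxm : x ∈ t := List.mem_of_getLast? hx
              have := List.mem_takeWhile_imp (by rw [← ht]; exact hxm)
              simpa [hQ] using this
            have hye : y = e' := by
              rw [hp'h] at hy; simpa using hy.symm
            rw [hye]
            exact le_trans hx1 (le_of_lt he'gt)

open Classical in
lemma down_walk (E : Finset (V × V)) (S : V × V → ℕ∞) (hP : ProperScope E S) (M : ℕ∞)
    (hM : ∀ x ∈ E, S x ≤ M) (hg : ∃ g ∈ E, S g = M) :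
    ∀ n : ℕ, ∀ f ∈ E, ((E.image S).filter (fun v => S f ≤ v)).card ≤ n →
    ∃ q b, IsWalk E b.1 f.2 q ∧ q.head? = some b ∧ q.getLast? = some f ∧
      b ∈ E ∧ S b = M ∧ List.Chain' (fun x y => S y ≤ S x) q := by
  intro n
  induction n with
  | zero =>
      intro f hf hcard
      exfalso
      have : S f ∈ (E.image S).filter (fun v => S f ≤ v) := by
        simp only [Finset.mem_filter, Finset.mem_image]
        exact ⟨⟨f, hf, rfl⟩, le_refl _⟩
      have := Finset.card_pos.2 ⟨_, this⟩
      omega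
  | succ n ih =>
      intro f hf hcard
      by_cases hSf : S f = M
      · exact ⟨[f], f, ⟨rfl, hf, rfl⟩, rfl, rfl, hf, hSf, List.isChain_singleton f⟩
      · have hSfM : S f < M := lt_of_le_of_ne (hM f hf) hSf
        obtain ⟨g, hgE, hgM⟩ := hg
        set E' := E.filter (fun x => S f ≤ S x) with hE'
        have hE'sub : E' ⊆ E := Finset.filter_subset _ _
        have hfE' : f ∈ E' := Finset.mem_filter.2 ⟨hf, le_refl _⟩
        have hgE' : g ∈ E' := Finset.mem_filter.2 ⟨hgE, by rw [hgM]; exact le_of_lt hSfM⟩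
        obtain ⟨w, hw, hwh, hwl⟩ := hP (S f) ⟨f, hf, rfl⟩ g hgE' f hfE'
        have hwE' : ∀ x ∈ w, x ∈ E' := isWalk_edges_mem hw
        have hwge : ∀ x ∈ w, S f ≤ S x := fun x hx => (Finset.mem_filter.1 (hwE' x hx)).2
        set r := w.reverse with hr
        set Q : V × V → Bool := fun x => decide (S x ≤ S f) with hQ
        set t := r.takeWhile Q with ht
        set d := r.dropWhile Q with hd
        have hdnil : d ≠ [] := by
          intro hcon
          have := List.dropWhile_eq_nil_iff.1 hcon g (by
            rw [hr, List.mem_reverse]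
            exact List.mem_of_mem_head? (by rw [hwh]; rfl))
          rw [hQ] at this
          simp only [decide_eq_true_eq] at this
          exact absurd (le_trans (le_of_eq hgM.symm) this) (not_le.2 hSfM)
        obtain ⟨b, d', hd'⟩ := List.exists_cons_of_ne_nil hdnil
        have hbr : b ∈ r := (List.dropWhile_sublist Q).subset (by rw [← hd, hd']; exact List.mem_cons_self)
        have hbw : b ∈ w := by rwa [hr, List.mem_reverse] at hbr
        have hbE : b ∈ E := hE'sub (hwE' b hbw)
        have hbgt : S f < S b := by
          have hdn : List.dropWhile Q r ≠ [] := by rw [← hd]; exact hdnil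
          have h1 := List.head_dropWhile_not Q hdn
          have h2 : (List.dropWhile Q r).head hdn = b := by
            have h3 : (List.dropWhile Q r).head? = some b := by rw [← hd, hd']; rfl
            rw [List.head?_eq_head hdn] at h3
            exact Option.some.inj h3
          rw [h2] at h1
          simp only [hQ, decide_eq_false_iff_not, not_le] at h1
          exact h1
        -- t starts with f
        have htf : t.head? = some f := by
          have hrh : r.head? = some f := by rw [hr, List.head?_reverse]; exact hwl
          have hrne : r ≠ [] := by intro hcon; rw [hcon] at hrh; simp at hrh
          obtain ⟨x, r', hxr⟩ := List.exists_cons_of_ne_nil hrne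
          have hxf : x = f := by rw [hxr] at hrh; simpa using hrh
          subst hxf
          rw [ht, hxr, List.takeWhile_cons_of_pos (by simp [hQ])]
          rfl
        -- measure decreases
        have hsubset : (E.image S).filter (fun v => S b ≤ v) ⊂
            (E.image S).filter (fun v => S f ≤ v) := by
          refine Finset.ssubset_iff_of_subset ?_ |>.2 ?_
          · intro v hv
            rcases Finset.mem_filter.1 hv with ⟨hv1, hv2⟩
            exact Finset.mem_filter.2 ⟨hv1, le_trans (le_of_lt hbgt) hv2⟩
          · exact ⟨S f, Finset.mem_filter.2 ⟨Finset.mem_image_of_mem S hf, le_refl _⟩,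
              fun hcon => absurd (Finset.mem_filter.1 hcon).2 (not_le.2 hbgt)⟩
        have hcard' : ((E.image S).filter (fun v => S b ≤ v)).card ≤ n := by
          have := Finset.card_lt_card hsubset
          omega
        obtain ⟨q', a, hq'w, hq'h, hq'l, haE, haM, hq'c⟩ := ih b hbE hcard'
        -- split the walk w = d.reverse ++ t.reverse
        have hwsplit : w = d.reverse ++ t.reverse := by
          rw [← List.reverse_append, ht, hd, List.takeWhile_append_dropWhile, hr,
            List.reverse_reverse]
        have hw2 : IsWalk E g.1 f.2 (d.reverse ++ t.reverse) := by
          rw [← hwsplit]; exact isWalk_mono hE'sub hw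
        obtain ⟨mid, hmid1, hmid2⟩ := isWalk_append.1 hw2
        have hdl : d.reverse.getLast? = some b := by
          rw [List.getLast?_reverse, hd']; rfl
        have hmidb : mid = b.2 := isWalk_end hmid1 hdl
        subst hmidb
        refine ⟨q' ++ t.reverse, a, ?_, ?_, ?_, haE, haM, ?_⟩
        · exact isWalk_append.2 ⟨b.2, hq'w, hmid2⟩
        · have hq'ne : q' ≠ [] := by
            intro hcon; rw [hcon] at hq'h; exact absurd hq'h (by simp)
          rw [List.head?_append]
          rw [hq'h]; rfl
        · rw [List.getLast?_append, List.getLast?_reverse, htf]; rfl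
        · apply List.isChain_append.2
          refine ⟨hq'c, ?_, ?_⟩
          · apply chain'_const
            intro x hx y hy
            have hy1 : S y ≤ S f := by
              have := List.mem_takeWhile_imp (by
                rw [← ht]; exact (List.mem_reverse.1 hy))
              simpa [hQ] using this
            have hx2 : S f ≤ S x := by
              apply hwge
              rw [← List.mem_reverse, ← hr]
              exact (List.takeWhile_sublist Q).subset (by rw [← ht]; exact List.mem_reverse.1 hx)
            exact le_trans hy1 hx2
          · intro x hx y hy
            have hxb : x = b := by rw [hq'l] at hx; simpa using hx.symm
            have hy1 : S y ≤ S f := by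
              have hym : y ∈ t := by
                have := List.mem_of_mem_head? hy
                exact List.mem_reverse.1 this
              have := List.mem_takeWhile_imp (by rw [← ht]; exact hym)
              simpa [hQ] using this
            rw [hxb]
            exact le_trans hy1 (le_of_lt hbgt)

/-- For a routing-connected graph with a proper scope mapping, every two edges
`e = (s,x)` and `f = (y,t)` are joined by a walk from `s` to `t` starting with
`e`, ending with `f`, whose edge sequence splits into a prefix with
non-decreasing scope levels followed by a suffix with non-increasing ones. -/
theorem properScope_monotone_walk (E : Finset (V × V)) (S : V × V → ℕ∞)
    (hRC : RoutingConnected E) (hP : ProperScope E S)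
    (e f : V × V) (he : e ∈ E) (hf : f ∈ E) :
    ∃ p q : List (V × V),
      IsWalk E e.1 f.2 (p ++ q) ∧
      (p ++ q).head? = some e ∧ (p ++ q).getLast? = some f ∧
      List.Chain' (fun a b => S a ≤ S b) p ∧
      List.Chain' (fun a b => S b ≤ S a) q := by
  classical
  have hne : (E.image S).Nonempty := ⟨S e, Finset.mem_image_of_mem S he⟩
  set M := (E.image S).max' hne with hMdef
  have hM : ∀ x ∈ E, S x ≤ M := fun x hx => Finset.le_max' _ _ (Finset.mem_image_of_mem S hx)
  have hg : ∃ g ∈ E, S g = M := by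
    have := (E.image S).max'_mem hne
    rcases Finset.mem_image.1 this with ⟨g, hgE, hgM⟩
    exact ⟨g, hgE, hgM⟩
  obtain ⟨p₁, a, hp₁w, hp₁h, hp₁l, haE, haM, hp₁c⟩ :=
    up_walk E S hP M hM hg _ e he le_rfl
  obtain ⟨q₁, b, hq₁w, hq₁h, hq₁l, hbE, hbM, hq₁c⟩ :=
    down_walk E S hP M hM hg _ f hf le_rfl
  -- connect a to b at the top level
  obtain ⟨g, hgE, hgM⟩ := hg
  have hRCM := hP M ⟨g, hgE, hgM⟩
  set EM := E.filter (fun x => M ≤ S x) with hEM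
  have haEM : a ∈ EM := Finset.mem_filter.2 ⟨haE, le_of_eq haM.symm⟩
  have hbEM : b ∈ EM := Finset.mem_filter.2 ⟨hbE, le_of_eq hbM.symm⟩
  obtain ⟨tw, htw, htwh, htwl⟩ := hRCM a haEM b hbEM
  have htwE : ∀ x ∈ tw, S x = M := by
    intro x hx
    have hxE := isWalk_edges_mem htw x hx
    rcases Finset.mem_filter.1 hxE with ⟨hx1, hx2⟩
    exact le_antisymm (hM x hx1) hx2
  -- decompose tw = a :: t'
  have htwne : tw ≠ [] := by intro hcon; rw [hcon] at htwh; exact absurd htwh (by simp)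
  obtain ⟨a', t', rfl⟩ := List.exists_cons_of_ne_nil htwne
  have haa : a' = a := by simpa using htwh
  obtain ⟨-, -, hta⟩ := htw
  rw [haa] at hta
  have hta' : IsWalk E a.2 b.2 t' := isWalk_mono (Finset.filter_subset _ _) hta
  -- decompose q₁ = b :: q₁'
  have hq₁ne : q₁ ≠ [] := by intro hcon; rw [hcon] at hq₁h; exact absurd hq₁h (by simp)
  obtain ⟨b', q₁', rfl⟩ := List.exists_cons_of_ne_nil hq₁ne
  have hbb : b' = b := by simpa using hq₁h
  obtain ⟨-, -, hqb⟩ := hq₁w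
  rw [hbb] at hqb
  have hp₁ne : p₁ ≠ [] := by intro hcon; rw [hcon] at hp₁h; exact absurd hp₁h (by simp)
  refine ⟨p₁ ++ t', q₁', ?_, ?_, ?_, ?_, ?_⟩
  · rw [List.append_assoc]
    exact isWalk_append.2 ⟨a.2, hp₁w, isWalk_append.2 ⟨b.2, hta', hqb⟩⟩
  · rw [List.append_assoc, List.head?_append, List.head?_append, hp₁h]
    rfl
  · -- getLast
    rw [List.getLast?_append, List.getLast?_append]
    by_cases hq : q₁' = []
    · subst hq
      have hbf : b = f := by rw [← hbb]; simpa using hq₁l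
      by_cases ht : t' = []
      · subst ht
        have hab : a = b := by rw [← haa]; simpa using htwl
        simp only [List.getLast?_nil, Option.or_none, Option.none_or]
        rw [hp₁l, hab, hbf]
      · obtain ⟨x, t'', rfl⟩ := List.exists_cons_of_ne_nil ht
        rw [List.getLast?_cons_cons] at htwl
        simp only [List.getLast?_nil, Option.none_or]
        rw [htwl, hbf]
        rfl
    · obtain ⟨x, q'', rfl⟩ := List.exists_cons_of_ne_nil hq
      rw [List.getLast?_cons_cons] at hq₁l
      rw [hq₁l]
      rfl
  · -- chain up
    apply List.isChain_append.2
    refine ⟨hp₁c, ?_, ?_⟩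
    · apply chain'_const
      intro x hx y hy
      rw [htwE x (List.mem_cons_of_mem _ hx), htwE y (List.mem_cons_of_mem _ hy)]
    · intro x hx y hy
      have hxa : x = a := by rw [hp₁l] at hx; simpa using hx.symm
      have hyM : S y = M := htwE y (List.mem_cons_of_mem _ (List.mem_of_mem_head? hy))
      rw [hxa, haM, hyM]
  · exact hq₁c.tail
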